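/- arXiv:1901.02479 — 4 statements merged into one kernel-verified Lean document; each statement's English description precedes it below -/
import Mathlib

section
/- Let G be the specified graph on 12 vertices. Then for every natural number N, if there exists a covering array with forbidden edges CAFE(N;G), then N ≥ 12. -/
/-- The forbidden-edge graph `G` on vertex set `Fin 4 × Fin 3`. -/
def EdgeSet : Set (Sym2 (Fin 4 × Fin 3)) :=
  {s((0, 0), (1, 0)), s((2, 0), (3, 0)), s((0, 1), (2, 1)),
   s((1, 1), (3, 1)), s((0, 2), (3, 2)), s((1, 2), (2, 2))}

/-- A row `c` avoids `G` if no pair of its entries forms an edge of `G`. -/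
def Avoids (c : Fin 4 → Fin 3) : Prop :=
  ∀ i j : Fin 4, i ≠ j → s((i, c i), (j, c j)) ∉ EdgeSet

/-- A covering array with forbidden edges `CAFE(N; G)`. -/
def IsCAFE {N : ℕ} (A : Fin N → Fin 4 → Fin 3) : Prop :=
  (∀ r, Avoids (A r)) ∧
  ∀ i j : Fin 4, i ≠ j → ∀ a b : Fin 3,
    s((i, a), (j, b)) ∉ EdgeSet → ∃ r, A r i = a ∧ A r j = b

/-!
Every pair of columns `{i, j}` carries exactly one edge of `G`, and that edge joins a symbol
`s` to itself. Call the interaction `((i, a), (j, b))` critical if `a ≠ b` and neither `a` nor `b`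
is that symbol `s`: there are `6 · 2 = 12` critical interactions, none of them is an edge, so a
CAFE covers each of them, and a finite check shows that no row avoiding `G` covers two of them.
Hence the rows covering the critical interactions are pairwise distinct.
-/

open Finset

instance : DecidablePred (· ∈ EdgeSet) := fun x =>
  decidable_of_iff (x = s((0, 0), (1, 0)) ∨ x = s((2, 0), (3, 0)) ∨ x = s((0, 1), (2, 1)) ∨
    x = s((1, 1), (3, 1)) ∨ x = s((0, 2), (3, 2)) ∨ x = s((1, 2), (2, 2)))
    (by simp [EdgeSet])

instance : DecidablePred Avoids := fun c => by
  unfold Avoids; infer_instance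

theorem eq_of_mem_edgeSet : ∀ i j : Fin 4, ∀ a b : Fin 3, s((i, a), (j, b)) ∈ EdgeSet → a = b := by
  decide

/-- The interaction `(i, j, a, b)` stands for the pair of vertices `(i, a)`, `(j, b)`. -/
def IsCritical : Fin 4 × Fin 4 × Fin 3 × Fin 3 → Prop
  | (i, j, a, b) => i < j ∧ a ≠ b ∧ s((i, a), (j, a)) ∉ EdgeSet ∧ s((i, b), (j, b)) ∉ EdgeSet

def Covers (c : Fin 4 → Fin 3) : Fin 4 × Fin 4 × Fin 3 × Fin 3 → Prop
  | (i, j, a, b) => c i = a ∧ c j = b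

instance : DecidablePred IsCritical := fun _ => by
  unfold IsCritical; infer_instance

instance (c : Fin 4 → Fin 3) : DecidablePred (Covers c) := fun _ => by
  unfold Covers; infer_instance

def criticalInteractions : Finset (Fin 4 × Fin 4 × Fin 3 × Fin 3) :=
  {d | IsCritical d}

theorem card_criticalInteractions : #criticalInteractions = 12 := by
  decide

theorem IsCAFE.exists_covers {N : ℕ} {A : Fin N → Fin 4 → Fin 3} (hA : IsCAFE A)
    {d : Fin 4 × Fin 4 × Fin 3 × Fin 3} (hd : d ∈ criticalInteractions) :
    ∃ r, Covers (A r) d := by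
  obtain ⟨i, j, a, b⟩ := d
  obtain ⟨hij, hab, -, -⟩ : IsCritical (i, j, a, b) := by simpa [criticalInteractions] using hd
  exact hA.2 i j hij.ne a b fun hedge => hab (eq_of_mem_edgeSet i j a b hedge)

theorem card_covers_criticalInteractions_le_one :
    ∀ c, Avoids c → #{d ∈ criticalInteractions | Covers c d} ≤ 1 := by
  decide

theorem Avoids.subsingleton_covers {c : Fin 4 → Fin 3} (hc : Avoids c) :
    ({d ∈ criticalInteractions | Covers c d} : Set _).Subsingleton := by
  intro d hd d' hd'
  exact card_le_one.1 (card_covers_criticalInteractions_le_one c hc) d (by simpa using hd) d'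
    (by simpa using hd')

theorem optimal_size :
    ∀ N : ℕ, (∃ A : Fin N → Fin 4 → Fin 3, IsCAFE A) → 12 ≤ N := by
  rintro N ⟨A, hA⟩
  calc 12 = #criticalInteractions := card_criticalInteractions.symm
    _ ≤ #(univ : Finset (Fin N)) :=
      card_le_card_of_forall_subsingleton (fun d r => Covers (A r) d)
        (fun d hd => (hA.exists_covers hd).imp fun r hr => ⟨mem_univ r, hr⟩)
        (fun r _ => (hA.1 r).subsingleton_covers)
    _ = N := card_fin N
end

section
/- The explicit 12 × 4 array over Fin 3 with rows (1,2,0,2), (2,1,2,0), (0,1,1,2), (1,0,2,1), (0,1,2,0), (2,0,0,1), (1,0,2,2), (2,2,1,0), (0,2,1,1), (1,1,2,0), (2,0,1,0), (0,1,0,2) is a CAFE(12;G); in particular a CAFE(12;G) exists. -/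
/-- The explicit 12 × 4 array. -/
def A₀ : Fin 12 → Fin 4 → Fin 3 :=
  ![![1, 2, 0, 2], ![2, 1, 2, 0], ![0, 1, 1, 2], ![1, 0, 2, 1],
    ![0, 1, 2, 0], ![2, 0, 0, 1], ![1, 0, 2, 2], ![2, 2, 1, 0],
    ![0, 2, 1, 1], ![1, 1, 2, 0], ![2, 0, 1, 0], ![0, 1, 0, 2]]

def edgeFinset : Finset (Sym2 (Fin 4 × Fin 3)) :=
  {s((0, 0), (1, 0)), s((2, 0), (3, 0)), s((0, 1), (2, 1)),
   s((1, 1), (3, 1)), s((0, 2), (3, 2)), s((1, 2), (2, 2))}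

theorem coe_edgeFinset : (edgeFinset : Set (Sym2 (Fin 4 × Fin 3))) = EdgeSet := by
  simp [edgeFinset, EdgeSet]

instance inst_s1 : DecidablePred (· ∈ EdgeSet) := fun e =>
  decidable_of_iff (e ∈ edgeFinset) (by rw [← Finset.mem_coe, coe_edgeFinset])

instance (c : Fin 4 → Fin 3) : Decidable (Avoids c) := by
  unfold Avoids; infer_instance

instance {N : ℕ} (A : Fin N → Fin 4 → Fin 3) : Decidable (IsCAFE A) := by
  unfold IsCAFE; infer_instance

theorem isCAFE_A₀ : IsCAFE A₀ := by decide

theorem explicit_array_is_CAFE :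
    IsCAFE A₀ ∧ ∃ A : Fin 12 → Fin 4 → Fin 3, IsCAFE A :=
  ⟨isCAFE_A₀, A₀, isCAFE_A₀⟩
end

section
/- No row avoiding G contains two distinct solitary pairs: if c : Fin 4 → Fin 3 avoids G, and {(i₁, c i₁), (j₁, c j₁)} and {(i₂, c i₂), (j₂, c j₂)} are both solitary pairs (with i₁ ≠ j₁ and i₂ ≠ j₂), then these two pairs are equal as unordered pairs. -/
/-- The pair `{(i,a),(j,b)}` (with `i ≠ j`, `a ≠ b`) is solitary if it is disjoint
from every (in fact the unique) edge of `G` joining column `i` to column `j`. -/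
def Solitary (i j : Fin 4) (a b : Fin 3) : Prop :=
  i ≠ j ∧ a ≠ b ∧ ∀ c d : Fin 3, s((i, c), (j, d)) ∈ EdgeSet → a ≠ c ∧ b ≠ d

open Finset

section NoShortCycles

variable {α : Type*} [Fintype α] {f : α → α}

theorem three_le_card_image_univ [DecidableEq α] (hfix : ∀ x, f x ≠ x)
    (hswap : ∀ x, f (f x) ≠ x) (x : α) : 3 ≤ #(univ.image f) := by
  have hthree : #{f x, f (f x), f (f (f x))} = 3 :=
    card_eq_three.2 ⟨_, _, _, (hfix _).symm, (hswap _).symm, (hfix _).symm, rfl⟩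
  have hsub : {f x, f (f x), f (f (f x))} ⊆ univ.image f := by
    simp only [insert_subset_iff, singleton_subset_iff, mem_image_univ_iff_mem_range,
      Set.mem_range_self, and_self]
  exact hthree ▸ card_le_card hsub

theorem injOn_compl_singleton_of_apply_eq (hcard : Fintype.card α ≤ 4) (hfix : ∀ x, f x ≠ x)
    (hswap : ∀ x, f (f x) ≠ x) {i j : α} (hij : i ≠ j) (hf : f i = f j) :
    Set.InjOn f {j}ᶜ := by
  classical
  have hfj : f j ∈ (univ.erase j).image f :=
    hf ▸ mem_image_of_mem f (mem_erase.2 ⟨hij, mem_univ i⟩)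
  have himage : (univ.erase j).image f = univ.image f := by
    rw [← insert_erase (mem_univ j), image_insert, insert_erase (mem_univ j), insert_eq_of_mem hfj]
  have hcard_erase : #(univ.erase j) ≤ 3 := by
    rw [card_erase_of_mem (mem_univ j), card_univ]
    omega
  rw [Set.compl_eq_univ_sdiff]
  simpa using injOn_of_card_image_eq <| le_antisymm card_image_le <|
    hcard_erase.trans (himage ▸ three_le_card_image_univ hfix hswap i)

theorem sym2_eq_of_apply_eq_of_apply_eq (hcard : Fintype.card α ≤ 4) (hfix : ∀ x, f x ≠ x)
    (hswap : ∀ x, f (f x) ≠ x) {i j p q : α} (hij : i ≠ j) (hfij : f i = f j) (hpq : p ≠ q)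
    (hfpq : f p = f q) : s(i, j) = s(p, q) := by
  have hinj := injOn_compl_singleton_of_apply_eq hcard hfix hswap hij hfij
  by_cases hp : p = j
  · subst hp
    rw [hinj (Ne.symm hpq) hij (hfpq.symm.trans hfij.symm), Sym2.eq_swap]
  by_cases hq : q = j
  · subst hq
    rw [hinj hp hij (hfpq.trans hfij.symm)]
  exact absurd (hinj hp hq hfpq) hpq

end NoShortCycles

def mateColumn (i : Fin 4) (a : Fin 3) : Fin 4 := i ^^^ a.succ

theorem mk_mem_edgeSet_iff {i j : Fin 4} {a b : Fin 3} :
    s((i, a), (j, b)) ∈ EdgeSet ↔ j = mateColumn i a ∧ b = a := by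
  simp only [EdgeSet, Set.mem_insert_iff, Set.mem_singleton_iff]
  revert i j a b
  decide

theorem mateColumn_ne (i : Fin 4) (a : Fin 3) : mateColumn i a ≠ i := by
  revert i a
  decide

theorem mateColumn_mateColumn (i : Fin 4) (a : Fin 3) : mateColumn (mateColumn i a) a = i := by
  revert i a
  decide

theorem mateColumn_injective (i : Fin 4) : Function.Injective (mateColumn i) := by
  revert i
  decide

theorem solitary_iff {i j : Fin 4} {a b : Fin 3} :
    Solitary i j a b ↔ i ≠ j ∧ mateColumn i a = mateColumn j b := by
  simp only [Solitary, mk_mem_edgeSet_iff]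
  revert i j a b
  decide

theorem Avoids.mateColumn_mateColumn_ne {c : Fin 4 → Fin 3} (hc : Avoids c) (i : Fin 4) :
    mateColumn (mateColumn i (c i)) (c (mateColumn i (c i))) ≠ i := by
  intro h
  have hcol : c (mateColumn i (c i)) = c i :=
    mateColumn_injective _ (h.trans (mateColumn_mateColumn i (c i)).symm)
  exact hc i _ (mateColumn_ne i (c i)).symm (mk_mem_edgeSet_iff.2 ⟨rfl, hcol⟩)

theorem no_two_solitary_pairs_in_a_row (c : Fin 4 → Fin 3) (hc : Avoids c)
    (i₁ j₁ i₂ j₂ : Fin 4)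
    (h₁ : Solitary i₁ j₁ (c i₁) (c j₁)) (h₂ : Solitary i₂ j₂ (c i₂) (c j₂)) :
    s((i₁, c i₁), (j₁, c j₁)) = s((i₂, c i₂), (j₂, c j₂)) := by
  rw [solitary_iff] at h₁ h₂
  have hcols : s(i₁, j₁) = s(i₂, j₂) :=
    sym2_eq_of_apply_eq_of_apply_eq (f := fun i => mateColumn i (c i)) (Fintype.card_fin 4).le
      (fun i => mateColumn_ne i (c i)) hc.mateColumn_mateColumn_ne h₁.1 h₁.2 h₂.1 h₂.2
  simpa only [Sym2.map_mk] using congrArg (Sym2.map fun i => (i, c i)) hcols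
end

section
/- G is arc-transitive under the group generated by g₁ and g₂: for any two ordered pairs of adjacent vertices (u₁, w₁) and (u₂, w₂) with {u₁, w₁} and {u₂, w₂} edges of G, there exists an element σ of the subgroup generated by g₁ and g₂ such that σ u₁ = u₂ and σ w₁ = w₂. -/
/-- `g₁`: the product of the disjoint transpositions
`(0,0)↔(1,0)`, `(0,1)↔(1,2)`, `(0,2)↔(1,1)`, `(2,1)↔(2,2)`, `(3,1)↔(3,2)`;
it fixes `(2,0)` and `(3,0)`. -/
def g₁ : Equiv.Perm (Fin 4 × Fin 3) :=
  Equiv.swap (0, 0) (1, 0) * Equiv.swap (0, 1) (1, 2) * Equiv.swap (0, 2) (1, 1) *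
    Equiv.swap (2, 1) (2, 2) * Equiv.swap (3, 1) (3, 2)

/-- The 4-cycle `a → b → c → d → a`. -/
def cyc4 (a b c d : Fin 4 × Fin 3) : Equiv.Perm (Fin 4 × Fin 3) :=
  Equiv.swap a d * Equiv.swap a c * Equiv.swap a b

/-- `g₂`: the product of the disjoint 4-cycles
`(0,0)→(1,2)→(2,0)→(3,2)→(0,0)`, `(1,0)→(2,2)→(3,0)→(0,2)→(1,0)`,
`(0,1)→(1,1)→(2,1)→(3,1)→(0,1)`. -/
def g₂ : Equiv.Perm (Fin 4 × Fin 3) :=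
  cyc4 (0, 0) (1, 2) (2, 0) (3, 2) * cyc4 (1, 0) (2, 2) (3, 0) (0, 2) *
    cyc4 (0, 1) (1, 1) (2, 1) (3, 1)

/-!
Arc-transitivity reduces to reaching every arc from the single base arc `((0,0), (1,0))`:
if `σ₁` and `σ₂` move the base arc to two given arcs, then `σ₂ * σ₁⁻¹` moves the first onto
the second. The twelve arcs (six edges, two orientations) are reached by explicit short words
in `g₁` and `g₂`, each checked by evaluation.
-/

theorem Subgroup.exists_mem_map_pair_of_forall_map_base {α : Type*} {H : Subgroup (Equiv.Perm α)}
    {P : α → α → Prop} (a b : α) (hbase : ∀ u w, P u w → ∃ σ ∈ H, σ a = u ∧ σ b = w)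
    {u₁ w₁ u₂ w₂ : α} (h₁ : P u₁ w₁) (h₂ : P u₂ w₂) :
    ∃ σ ∈ H, σ u₁ = u₂ ∧ σ w₁ = w₂ := by
  obtain ⟨σ₁, hσ₁, rfl, rfl⟩ := hbase u₁ w₁ h₁
  obtain ⟨σ₂, hσ₂, rfl, rfl⟩ := hbase u₂ w₂ h₂
  exact ⟨σ₂ * σ₁⁻¹, mul_mem hσ₂ (inv_mem hσ₁), by simp, by simp⟩

theorem exists_mem_closure_map_base_arc (u w : Fin 4 × Fin 3) (h : s(u, w) ∈ EdgeSet) :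
    ∃ σ ∈ Subgroup.closure ({g₁, g₂} : Set (Equiv.Perm (Fin 4 × Fin 3))),
      σ (0, 0) = u ∧ σ (1, 0) = w := by
  have h₁ : g₁ ∈ Subgroup.closure ({g₁, g₂} : Set (Equiv.Perm (Fin 4 × Fin 3))) :=
    Subgroup.subset_closure (Set.mem_insert _ _)
  have h₂ : g₂ ∈ Subgroup.closure ({g₁, g₂} : Set (Equiv.Perm (Fin 4 × Fin 3))) :=
    Subgroup.subset_closure (Set.mem_insert_of_mem _ rfl)
  simp only [EdgeSet, Set.mem_insert_iff, Set.mem_singleton_iff, Sym2.eq_iff] at h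
  rcases h with (⟨rfl, rfl⟩ | ⟨rfl, rfl⟩) | (⟨rfl, rfl⟩ | ⟨rfl, rfl⟩) | (⟨rfl, rfl⟩ | ⟨rfl, rfl⟩) |
    (⟨rfl, rfl⟩ | ⟨rfl, rfl⟩) | (⟨rfl, rfl⟩ | ⟨rfl, rfl⟩) | (⟨rfl, rfl⟩ | ⟨rfl, rfl⟩)
  · exact ⟨1, one_mem _, by decide, by decide⟩
  · exact ⟨g₁, h₁, by decide, by decide⟩
  · exact ⟨g₂ ^ 2, pow_mem h₂ 2, by decide, by decide⟩
  · exact ⟨g₂ ^ 2 * g₁, mul_mem (pow_mem h₂ 2) h₁, by decide, by decide⟩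
  · exact ⟨g₁ * g₂, mul_mem h₁ h₂, by decide, by decide⟩
  · exact ⟨g₁ * g₂ * g₁, mul_mem (mul_mem h₁ h₂) h₁, by decide, by decide⟩
  · exact ⟨g₂ * g₁ * g₂, mul_mem (mul_mem h₂ h₁) h₂, by decide, by decide⟩
  · exact ⟨g₂ * g₁ * g₂ * g₁, mul_mem (mul_mem (mul_mem h₂ h₁) h₂) h₁, by decide, by decide⟩
  · exact ⟨g₂ ^ 3 * g₁, mul_mem (pow_mem h₂ 3) h₁, by decide, by decide⟩
  · exact ⟨g₂ ^ 3, pow_mem h₂ 3, by decide, by decide⟩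
  · exact ⟨g₂, h₂, by decide, by decide⟩
  · exact ⟨g₂ * g₁, mul_mem h₂ h₁, by decide, by decide⟩

theorem arc_transitive (u₁ w₁ u₂ w₂ : Fin 4 × Fin 3)
    (h₁ : s(u₁, w₁) ∈ EdgeSet) (h₂ : s(u₂, w₂) ∈ EdgeSet) :
    ∃ σ ∈ Subgroup.closure ({g₁, g₂} : Set (Equiv.Perm (Fin 4 × Fin 3))),
      σ u₁ = u₂ ∧ σ w₁ = w₂ :=
  Subgroup.exists_mem_map_pair_of_forall_map_base (P := fun u w ↦ s(u, w) ∈ EdgeSet) (0, 0) (1, 0)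
    exists_mem_closure_map_base_arc h₁ h₂
end
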